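/- arXiv:math/9903123 — 4 statements merged into one kernel-verified Lean document; each statement's English description precedes it below -/
import Mathlib

section
/- Let Δ₁ be a subsystem of the real roots of an affine root system (i.e., a subset of Δ_re closed under the reflections s_α for α ∈ Δ₁). Then the following conditions are equivalent: (i) Δ₁ is finite; (ii) the Weyl group W₁ generated by {s_α : α ∈ Δ₁} is finite; (iii) the null root δ is not in the ℂ-span of Δ₁; (iv) δ is not in the ℚ-span of Δ₁. -/
open scoped BigOperators

/-- Abstract data of (the root system of) an affine Lie algebra, living in the
complex dual Cartan `V = 𝔥*`.  `ι` indexes the simple roots. -/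
structure AffineRootSystem (ι V : Type*) [Fintype ι] [AddCommGroup V] [Module ℂ V] where
  /-- the normalized invariant symmetric bilinear form `( , )` on `𝔥*` -/
  B : V →ₗ[ℂ] V →ₗ[ℂ] ℂ
  symm : ∀ x y, B x y = B y x
  /-- the simple roots `α_i` -/
  simple : ι → V
  /-- the set of all roots `Δ` -/
  Δ : Set V
  /-- the set of real roots `Δ_re` -/
  Δre : Set V
  /-- the set of positive roots `Δ⁺` -/
  pos : Set V
  /-- the basic positive imaginary root `δ` -/
  δ : V
  /-- a fixed `ρ` with `(α_i∨, ρ) = 1` -/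
  ρ : V
  /-- the integral weight lattice `P` -/
  P : AddSubgroup V
  /-- the reflection `s_α` (as a linear automorphism of `𝔥*`) -/
  reflEquiv : V → (V ≃ₗ[ℂ] V)
  Δre_sub : Δre ⊆ Δ
  pos_sub : pos ⊆ Δ
  simple_mem : ∀ i, simple i ∈ Δre
  simple_pos : ∀ i, simple i ∈ pos
  δ_ne : δ ≠ 0
  δ_pos : δ ∈ pos
  B_δ_δ : B δ δ = 0
  B_δ_re : ∀ α ∈ Δre, B δ α = 0
  norm_rat_pos : ∀ α ∈ Δre, ∃ q : ℚ, 0 < q ∧ B α α = (q : ℂ)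
  pairing_rat : ∀ α ∈ Δre, ∀ β ∈ Δre, ∃ q : ℚ, B α β = (q : ℂ)
  reflEquiv_apply : ∀ α ∈ Δre, ∀ v, reflEquiv α v = v - (B ((2 / B α α) • α) v) • α
  refl_closed : ∀ α ∈ Δre, ∀ β ∈ Δre, reflEquiv α β ∈ Δre
  neg_mem : ∀ α ∈ Δre, -α ∈ Δre
  pos_or_neg : ∀ α ∈ Δre, α ∈ pos ∨ -α ∈ pos
  not_both : ∀ α ∈ Δre, ¬(α ∈ pos ∧ -α ∈ pos)
  ρ_normalized : ∀ i, B ((2 / B (simple i) (simple i)) • simple i) ρ = 1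
  simple_mem_P : ∀ i, simple i ∈ P
  ρ_mem_P : ρ ∈ P
  Δre_sub_P : Δre ⊆ (P : Set V)
  /-- each real root belongs to a `δ`-string of real roots -/
  string : ∀ α ∈ Δre, ∃ r : ℤ, 0 < r ∧ ∀ n : ℤ, α + (n * r) • δ ∈ Δre
  /-- finitely many classes of real roots modulo `ℤδ` (finiteness of `Δ_cl`) -/
  cl_finite : ∃ F : Finset V, ∀ α ∈ Δre, ∃ γ ∈ F, ∃ n : ℤ, α = γ + n • δ
  /-- the form is positive semidefinite on the rational span of the real roots,
  with radical spanned by `δ` -/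
  semidef : ∀ (t : Finset V) (c : V → ℚ), (↑t : Set V) ⊆ Δre →
    ∃ q : ℚ, 0 ≤ q ∧
      B (∑ α ∈ t, (c α : ℂ) • α) (∑ α ∈ t, (c α : ℂ) • α) = (q : ℂ) ∧
      (q = 0 → ∃ s : ℚ, ∑ α ∈ t, (c α : ℂ) • α = (s : ℂ) • δ)

namespace AffineRootSystem

variable {ι V : Type*} [Fintype ι] [AddCommGroup V] [Module ℂ V]
variable (A : AffineRootSystem ι V)

/-- the coroot `α∨ = 2α/(α,α)` -/
noncomputable def coroot (α : V) : V := (2 / A.B α α) • α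

/-- the pairing `(α∨, v)` -/
noncomputable def pair (α v : V) : ℂ := A.B (A.coroot α) v

/-- the reflection `s_α` as a map -/
noncomputable def refl (α v : V) : V := A.reflEquiv α v

/-- a subsystem of `Δ_re`: a subset closed under its own reflections -/
def IsSubsystem (Δ₁ : Set V) : Prop :=
  Δ₁ ⊆ A.Δre ∧ ∀ α ∈ Δ₁, ∀ β ∈ Δ₁, A.refl α β ∈ Δ₁

/-- the group generated by the reflections in a set of roots -/
noncomputable def weylOf (s : Set V) : Subgroup (V ≃ₗ[ℂ] V) :=
  Subgroup.closure (A.reflEquiv '' s)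

/-- the Weyl group `W` -/
noncomputable def W : Subgroup (V ≃ₗ[ℂ] V) := A.weylOf A.Δre

/-- the shifted (dot) action `w ∘ λ = w(λ+ρ) - ρ` -/
noncomputable def dot (w : V ≃ₗ[ℂ] V) (lam : V) : V := w (lam + A.ρ) - A.ρ

/-- membership in the `ℚ`-span of a subset of `V` -/
def memRatSpan (s : Set V) (v : V) : Prop :=
  ∃ (t : Finset V) (c : V → ℚ), (↑t : Set V) ⊆ s ∧ v = ∑ α ∈ t, (c α : ℂ) • α

/-- membership in the `ℚ_{≥0}`-cone spanned by a subset of `V` -/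
def memRatSpanNonneg (s : Set V) (v : V) : Prop :=
  ∃ (t : Finset V) (c : V → ℚ), (↑t : Set V) ⊆ s ∧ (∀ α ∈ t, 0 ≤ c α) ∧
    v = ∑ α ∈ t, (c α : ℂ) • α

/-- the positive part `Δ₁⁺ = Δ₁ ∩ Δ⁺` of a subsystem -/
def posPart (Δ₁ : Set V) : Set V := Δ₁ ∩ A.pos

/-- the set `Π₁` of simple roots of a subsystem:
`Π₁ = {α ∈ Δ₁⁺ ; s_α(Δ₁⁺ \ {α}) ⊆ Δ₁⁺}` -/
noncomputable def simpleOf (Δ₁ : Set V) : Set V :=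
  {α ∈ A.posPart Δ₁ | ∀ β ∈ A.posPart Δ₁ \ {α}, A.refl α β ∈ A.posPart Δ₁}

/-- the integral root system `Δ(λ) = {α ∈ Δ_re ; (α∨, λ+ρ) ∈ ℤ}` -/
noncomputable def Δint (lam : V) : Set V :=
  {α ∈ A.Δre | ∃ n : ℤ, A.pair α (lam + A.ρ) = (n : ℂ)}

/-- `Δ⁺(λ)` -/
noncomputable def ΔintPos (lam : V) : Set V := A.Δint lam ∩ A.pos

/-- `Δ⁻(λ)` -/
noncomputable def ΔintNeg (lam : V) : Set V := {α ∈ A.Δint lam | -α ∈ A.pos}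

/-- `Δ₀(λ) = {α ∈ Δ_re ; (α∨, λ+ρ) = 0}` -/
noncomputable def Δ0 (lam : V) : Set V := {α ∈ A.Δre | A.pair α (lam + A.ρ) = 0}

/-- `Δ₀⁺(λ)` -/
noncomputable def Δ0Pos (lam : V) : Set V := A.Δ0 lam ∩ A.pos

/-- the integral Weyl group `W(λ)` -/
noncomputable def Wint (lam : V) : Subgroup (V ≃ₗ[ℂ] V) := A.weylOf (A.Δint lam)

/-- the subgroup `W₀(λ)` -/
noncomputable def W0 (lam : V) : Subgroup (V ≃ₗ[ℂ] V) := A.weylOf (A.Δ0 lam)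

/-- the dot-orbit of `λ` under `W(λ)` -/
noncomputable def orbit (lam : V) : Set V := {μ | ∃ w ∈ A.Wint lam, μ = A.dot w lam}

/-- `𝒞 = {λ ; (δ, λ+ρ) ≠ 0}` -/
noncomputable def CC : Set V := {lam | A.B A.δ (lam + A.ρ) ≠ 0}

/-- `(α∨, λ+ρ)` is a nonnegative real number -/
noncomputable def nonnegAt (lam α : V) : Prop :=
  ∃ r : ℝ, 0 ≤ r ∧ A.pair α (lam + A.ρ) = (r : ℂ)

/-- `(α∨, λ+ρ)` is a nonpositive real number -/
noncomputable def nonposAt (lam α : V) : Prop :=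
  ∃ r : ℝ, r ≤ 0 ∧ A.pair α (lam + A.ρ) = (r : ℂ)

/-- `𝔥*⁺ = {λ ; (α∨,λ+ρ) ≥ 0 for all α ∈ Δ⁺(λ)}` -/
noncomputable def domP : Set V := {lam | ∀ α ∈ A.ΔintPos lam, A.nonnegAt lam α}

/-- `𝔥*⁻` -/
noncomputable def domM : Set V := {lam | ∀ α ∈ A.ΔintPos lam, A.nonposAt lam α}

/-- `𝒞⁺` -/
noncomputable def CCp : Set V := A.CC ∩ A.domP

/-- `𝒞⁻` -/
noncomputable def CCm : Set V := A.CC ∩ A.domM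

/-- `Δ_J = Δ ∩ Σ_{i ∈ J} ℤ α_i` -/
noncomputable def ΔJ (J : Set ι) : Set V :=
  {α ∈ A.Δ | ∃ c : ι → ℤ, (∀ i, i ∉ J → c i = 0) ∧ α = ∑ i, (c i : ℂ) • A.simple i}

/-- the dominant integral weights `P⁺` -/
noncomputable def Pplus : Set V :=
  {v | v ∈ A.P ∧ ∀ i, ∃ n : ℤ, 0 ≤ n ∧ A.pair (A.simple i) v = (n : ℂ)}

/-- the rational points `𝔥*_ℚ = ℚ ⊗_ℤ P` -/
noncomputable def ratPoints : Set V :=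
  {v | ∃ (t : Finset V) (c : V → ℚ), (↑t : Set V) ⊆ (A.P : Set V) ∧
    v = ∑ α ∈ t, (c α : ℂ) • α}

end AffineRootSystem

open scoped Pointwise Matrix

/-!
If `Δ₁` is finite, `W₁` permutes it through a finite group. Averaging over that group a
functional that is nonzero at `δ` gives a functional that is still nonzero at the fixed vector
`δ` but odd on `Δ₁` (as `s_α α = -α`), so `δ ∉ span_ℂ Δ₁`. The form is then nondegenerate on
`span_ℂ Δ₁`: its Gram matrix on a basis chosen inside `Δ₁` is rational, and a rational kernel
vector would be an isotropic rational combination of real roots, hence a multiple of `δ`. An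
element of `W₁` fixing `Δ₁` pointwise moves each vector by an element of `span_ℂ Δ₁` orthogonal
to `Δ₁`, so it is trivial, and `W₁` embeds into the finite set of maps `Δ₁ → Δ₁`.

If `Δ₁` is infinite, two of its roots lie in the same class modulo `ℤδ`, say `α` and `α + nδ`
with `n ≠ 0`. Then `δ = ((α + nδ) - α) / n` lies in the rational span of `Δ₁`, and
`s_α s_{α+nδ}` sends `α` to `α - 2nδ`, so it has infinite order in `W₁`.
-/

theorem notMem_span_of_finite_of_forall_exists_apply_eq_neg {K V : Type*} [Field K] [CharZero K]
    [AddCommGroup V] [Module K V] (G : Subgroup (V ≃ₗ[K] V)) {s : Set V} (hs : s.Finite)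
    (hGs : ∀ g ∈ G, ∀ x ∈ s, g x ∈ s) (hneg : ∀ x ∈ s, ∃ g ∈ G, g x = -x)
    {v : V} (hv : v ≠ 0) (hGv : ∀ g ∈ G, g v = v) : v ∉ Submodule.span K s := by
  intro hvs
  let p : SubMulAction G V := { carrier := s, smul_mem' := fun g x hx => hGs g g.2 x hx }
  have : Finite p := hs.to_subtype
  let H := (MulAction.toPermHom G p).range
  have : Fintype H := Fintype.ofFinite H
  have hH : ∀ h : H, ∃ g : G, ∀ x : p, ((h : Equiv.Perm p) x : V) = (g : V ≃ₗ[K] V) x := by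
    rintro ⟨_, g, rfl⟩
    exact ⟨g, fun x => rfl⟩
  obtain ⟨θ, hθ⟩ := Module.Projective.exists_dual_eq_one K hv
  let σ : p → K := fun x => ∑ h : H, θ ((h : Equiv.Perm p) x)
  have hσ_neg : ∀ x y : p, (y : V) = -x → σ y = -σ x := by
    intro x y hxy
    rw [← Finset.sum_neg_distrib]
    refine Finset.sum_congr rfl fun h _ => ?_
    obtain ⟨g, hg⟩ := hH h
    rw [hg, hg, hxy, map_neg, map_neg]
  have hσ_inv : ∀ h : H, ∀ x : p, σ ((h : Equiv.Perm p) x) = σ x := fun h x =>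
    Fintype.sum_equiv (Equiv.mulRight h) _ _ fun _ => rfl
  have hσ : ∀ x : p, σ x = 0 := by
    intro x
    obtain ⟨g, hg, hgx⟩ := hneg x x.2
    have h1 := hσ_neg x _ (show ((MulAction.toPermHom G p ⟨g, hg⟩) x : V) = -x from hgx)
    rw [hσ_inv ⟨_, ⟨g, hg⟩, rfl⟩] at h1
    exact self_eq_neg.1 h1
  obtain ⟨n, f, c, hfc⟩ := Submodule.mem_span_set'.1 hvs
  let c' : Fin n → p := fun i => ⟨c i, (c i).2⟩
  have hθv : ∀ h : H, ∑ i, f i * θ ((h : Equiv.Perm p) (c' i)) = 1 := by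
    intro h
    obtain ⟨g, hg⟩ := hH h
    simp only [hg, ← smul_eq_mul, ← map_smul, ← map_sum]
    rw [hfc, hGv g g.2, hθ]
  have : (Fintype.card H : K) = 0 := by
    calc (Fintype.card H : K) = ∑ h : H, ∑ i, f i * θ ((h : Equiv.Perm p) (c' i)) := by
          simp only [hθv, Finset.sum_const, Finset.card_univ, nsmul_eq_mul, mul_one]
      _ = ∑ i, f i * σ (c' i) := by
          rw [Finset.sum_comm]; simp only [σ, Finset.mul_sum]
      _ = 0 := by simp [hσ]
  exact Fintype.card_ne_zero (by exact_mod_cast this)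

namespace AffineRootSystem

variable {ι V : Type*} [Fintype ι] [AddCommGroup V] [Module ℂ V] (A : AffineRootSystem ι V)
  {s Δ₁ : Set V} {w : V ≃ₗ[ℂ] V}

lemma B_apply_δ {α : V} (hα : α ∈ A.Δre) : A.B α A.δ = 0 := by
  rw [A.symm]; exact A.B_δ_re α hα

lemma B_self_ne_zero {α : V} (hα : α ∈ A.Δre) : A.B α α ≠ 0 := by
  obtain ⟨q, hq, he⟩ := A.norm_rat_pos α hα
  rw [he]
  exact_mod_cast hq.ne'

lemma reflEquiv_apply_eq {α : V} (hα : α ∈ A.Δre) (v : V) :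
    A.reflEquiv α v = v - (2 / A.B α α * A.B α v) • α := by
  rw [A.reflEquiv_apply α hα v, map_smul]; rfl

lemma reflEquiv_self {α : V} (hα : α ∈ A.Δre) : A.reflEquiv α α = -α := by
  rw [A.reflEquiv_apply_eq hα, div_mul_cancel₀ 2 (A.B_self_ne_zero hα), two_smul]
  abel

lemma reflEquiv_δ {α : V} (hα : α ∈ A.Δre) : A.reflEquiv α A.δ = A.δ := by
  rw [A.reflEquiv_apply_eq hα, A.B_apply_δ hα, mul_zero, zero_smul, sub_zero]

lemma reflEquiv_reflEquiv {α : V} (hα : α ∈ A.Δre) (v : V) :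
    A.reflEquiv α (A.reflEquiv α v) = v := by
  conv_lhs => rw [A.reflEquiv_apply_eq hα v, map_sub, map_smul, A.reflEquiv_self hα,
    A.reflEquiv_apply_eq hα v]
  simp

lemma B_reflEquiv_reflEquiv {α : V} (hα : α ∈ A.Δre) (u v : V) :
    A.B (A.reflEquiv α u) (A.reflEquiv α v) = A.B u v := by
  simp only [A.reflEquiv_apply_eq hα, map_sub, map_smul, LinearMap.sub_apply,
    LinearMap.smul_apply, smul_eq_mul, A.symm u α]
  field_simp [A.B_self_ne_zero hα]
  ring

lemma reflEquiv_smul_eq (h : A.IsSubsystem Δ₁) {α : V} (hα : α ∈ Δ₁) :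
    A.reflEquiv α • Δ₁ = Δ₁ := by
  have hmaps : ∀ β ∈ Δ₁, A.reflEquiv α β ∈ Δ₁ := h.2 α hα
  refine (Set.smul_set_subset_iff.2 hmaps).antisymm fun β hβ => ?_
  refine Set.mem_smul_set.2 ⟨A.reflEquiv α β, hmaps β hβ, ?_⟩
  exact A.reflEquiv_reflEquiv (h.1 hα) β

section

variable {A}

lemma apply_δ_of_mem_weylOf (hs : s ⊆ A.Δre) (hw : w ∈ A.weylOf s) : w A.δ = A.δ :=
  (Subgroup.closure_le (MulAction.stabilizer (V ≃ₗ[ℂ] V) A.δ)).2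
    (by rintro _ ⟨α, hα, rfl⟩; exact A.reflEquiv_δ (hs hα)) hw

lemma weylOf_le_stabilizer (h : A.IsSubsystem s) :
    A.weylOf s ≤ MulAction.stabilizer (V ≃ₗ[ℂ] V) s :=
  (Subgroup.closure_le _).2 <| by
    rintro _ ⟨α, hα, rfl⟩
    exact A.reflEquiv_smul_eq h hα

lemma apply_mem_of_mem_weylOf (h : A.IsSubsystem s) (hw : w ∈ A.weylOf s) {α : V}
    (hα : α ∈ s) : w α ∈ s := by
  rw [← (weylOf_le_stabilizer h hw : w • s = s)]
  exact Set.smul_mem_smul_set hα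

lemma B_apply_apply_of_mem_weylOf (hs : s ⊆ A.Δre) (hw : w ∈ A.weylOf s) (u v : V) :
    A.B (w u) (w v) = A.B u v := by
  induction hw using Subgroup.closure_induction generalizing u v with
  | mem _ hx =>
    obtain ⟨α, hα, rfl⟩ := hx
    exact A.B_reflEquiv_reflEquiv (hs hα) u v
  | one => rfl
  | mul x y _ _ hx hy => exact (hx _ _).trans (hy u v)
  | inv x _ hx =>
    rw [← hx]
    simp

lemma apply_sub_mem_span_of_mem_weylOf (hs : s ⊆ A.Δre) (hw : w ∈ A.weylOf s) (v : V) :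
    w v - v ∈ Submodule.span ℂ s := by
  induction hw using Subgroup.closure_induction generalizing v with
  | mem _ hx =>
    obtain ⟨α, hα, rfl⟩ := hx
    rw [A.reflEquiv_apply_eq (hs hα), sub_sub_cancel_left]
    exact Submodule.neg_mem _ (Submodule.smul_mem _ _ (Submodule.subset_span hα))
  | one => simp
  | mul x y _ _ hx hy =>
    simpa using Submodule.add_mem _ (hx (y v)) (hy v)
  | inv x _ hx =>
    simpa using Submodule.neg_mem _ (hx (x⁻¹ v))

end

section

variable {κ : Type*} [Fintype κ] {v : κ → V}

lemma exists_sum_eq_smul_δ_of_B_self_eq_zero (hv : Function.Injective v)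
    (hvre : ∀ i, v i ∈ A.Δre) (q : κ → ℚ)
    (hq : A.B (∑ i, (q i : ℂ) • v i) (∑ i, (q i : ℂ) • v i) = 0) :
    ∃ r : ℚ, ∑ i, (q i : ℂ) • v i = (r : ℂ) • A.δ := by
  classical
  let c : V → ℚ := Function.extend v q 0
  have hc : ∑ i, (q i : ℂ) • v i = ∑ α ∈ Finset.univ.image v, (c α : ℂ) • α := by
    rw [Finset.sum_image fun i _ j _ hij => hv hij]
    simp only [c, hv.extend_apply]
  obtain ⟨r, -, hr, hr0⟩ := A.semidef _ c fun α hα => by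
    obtain ⟨i, -, rfl⟩ := Finset.mem_image.1 hα
    exact hvre i
  rw [hc] at hq ⊢
  exact hr0 (by exact_mod_cast hr.symm.trans hq)

section

variable {A} {G : Matrix κ κ ℚ} (hG : ∀ i j, A.B (v i) (v j) = G i j)
include hG

lemma map_mulVec_apply_eq_B (c : κ → ℂ) (j : κ) :
    (G.map (↑) *ᵥ c) j = A.B (v j) (∑ i, c i • v i) := by
  simp [Matrix.mulVec, dotProduct, hG, mul_comm]

lemma det_ne_zero_of_B_eq [DecidableEq κ] (hvre : ∀ i, v i ∈ A.Δre)
    (hli : LinearIndependent ℂ v) (hδ : A.δ ∉ Submodule.span ℂ (Set.range v)) :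
    G.det ≠ 0 := by
  intro h0
  obtain ⟨q, hq0, hq⟩ := Matrix.exists_mulVec_eq_zero_iff.2 h0
  set x := ∑ i, (q i : ℂ) • v i with hx
  have hxv : ∀ j, A.B (v j) x = 0 := fun j => by
    have h := RingHom.map_mulVec (Rat.castHom ℂ) G q j
    rw [hq, Pi.zero_apply, map_zero] at h
    rw [← map_mulVec_apply_eq_B hG]
    exact h.symm
  have hxx : A.B x x = 0 := by
    nth_rewrite 1 [hx]
    simp only [map_sum, map_smul, LinearMap.sum_apply, LinearMap.smul_apply, hxv, smul_zero,
      Finset.sum_const_zero]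
  obtain ⟨r, hr⟩ := A.exists_sum_eq_smul_δ_of_B_self_eq_zero hli.injective hvre q hxx
  rw [← hx] at hr
  rcases eq_or_ne r 0 with rfl | hr0
  · refine hq0 (funext fun i => ?_)
    have hx0 : ∑ i, (q i : ℂ) • v i = 0 := by rw [← hx, hr, Rat.cast_zero, zero_smul]
    exact_mod_cast Fintype.linearIndependent_iff.1 hli _ hx0 i
  · refine hδ ?_
    have hδx : A.δ = ((r : ℂ))⁻¹ • x := by
      rw [hr, smul_smul, inv_mul_cancel₀ (by exact_mod_cast hr0), one_smul]
    rw [hδx]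
    exact Submodule.smul_mem _ _ ((Submodule.mem_span_range_iff_exists_fun ℂ).2 ⟨_, rfl⟩)

end

end

lemma eq_zero_of_mem_span_of_forall_B_eq_zero (hs : s ⊆ A.Δre) (hfin : s.Finite)
    (hδ : A.δ ∉ Submodule.span ℂ s) {u : V} (hu : u ∈ Submodule.span ℂ s)
    (horth : ∀ α ∈ s, A.B α u = 0) : u = 0 := by
  classical
  obtain ⟨b, hbs, hspan, hli⟩ := exists_linearIndependent ℂ s
  have : Fintype b := (hfin.subset hbs).fintype
  have hrange : Set.range ((↑) : b → V) = b := Subtype.range_coe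
  choose G hG using fun i j : b => A.pairing_rat i (hs (hbs i.2)) j (hs (hbs j.2))
  have hdet := det_ne_zero_of_B_eq (G := Matrix.of G) hG (fun i => hs (hbs i.2)) hli
    (by rwa [hrange, hspan])
  rw [← hspan, ← hrange] at hu
  obtain ⟨c, rfl⟩ := (Submodule.mem_span_range_iff_exists_fun ℂ).1 hu
  have hc : (Matrix.of G).map (↑) *ᵥ c = 0 := funext fun j => by
    rw [map_mulVec_apply_eq_B (G := Matrix.of G) hG]
    exact horth j (hbs j.2)
  have hdet' : ((Matrix.of G).map ((↑) : ℚ → ℂ)).det ≠ 0 := by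
    rw [← Rat.coe_castHom, ← RingHom.mapMatrix_apply, ← RingHom.map_det]
    exact (map_ne_zero _).2 hdet
  simp [Matrix.eq_zero_of_mulVec_eq_zero hdet' hc]

section

variable {A}

lemma δ_notMem_span_of_finite (h : A.IsSubsystem Δ₁) (hfin : Δ₁.Finite) :
    A.δ ∉ Submodule.span ℂ Δ₁ :=
  notMem_span_of_finite_of_forall_exists_apply_eq_neg (A.weylOf Δ₁) hfin
    (fun _ hw _ hα => apply_mem_of_mem_weylOf h hw hα)
    (fun α hα => ⟨_, Subgroup.subset_closure ⟨α, hα, rfl⟩, A.reflEquiv_self (h.1 hα)⟩)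
    A.δ_ne (fun _ hw => apply_δ_of_mem_weylOf h.1 hw)

lemma eq_one_of_mem_weylOf_of_forall_apply_eq (h : A.IsSubsystem Δ₁) (hfin : Δ₁.Finite)
    (hw : w ∈ A.weylOf Δ₁) (hfix : ∀ α ∈ Δ₁, w α = α) : w = 1 := by
  refine LinearEquiv.ext fun v => sub_eq_zero.1 (?_ : w v - v = 0)
  refine A.eq_zero_of_mem_span_of_forall_B_eq_zero h.1 hfin (δ_notMem_span_of_finite h hfin)
    (apply_sub_mem_span_of_mem_weylOf h.1 hw v) fun α hα => ?_
  rw [map_sub, ← B_apply_apply_of_mem_weylOf h.1 hw α v, hfix α hα, sub_self]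

lemma finite_weylOf (h : A.IsSubsystem Δ₁) (hfin : Δ₁.Finite) :
    ((A.weylOf Δ₁ : Subgroup (V ≃ₗ[ℂ] V)) : Set (V ≃ₗ[ℂ] V)).Finite := by
  have : Finite Δ₁ := hfin.to_subtype
  let res : A.weylOf Δ₁ → Δ₁ → Δ₁ := fun w α =>
    ⟨(w : V ≃ₗ[ℂ] V) α, apply_mem_of_mem_weylOf h w.2 α.2⟩
  refine Set.finite_coe_iff.1 (Finite.of_injective res fun w w' hww' => ?_)
  have hfix : ∀ α ∈ Δ₁, ((w' : V ≃ₗ[ℂ] V)⁻¹ * w) α = α := fun α hα => by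
    have hα' : (w : V ≃ₗ[ℂ] V) α = (w' : V ≃ₗ[ℂ] V) α :=
      congrArg Subtype.val (congrFun hww' ⟨α, hα⟩)
    change (w' : V ≃ₗ[ℂ] V).symm ((w : V ≃ₗ[ℂ] V) α) = α
    rw [hα', LinearEquiv.symm_apply_apply]
  exact Subtype.ext (inv_mul_eq_one.1
    (eq_one_of_mem_weylOf_of_forall_apply_eq h hfin (mul_mem (inv_mem w'.2) w.2) hfix)).symm

lemma exists_add_smul_δ_mem_of_infinite (hs : s ⊆ A.Δre) (hinf : s.Infinite) :
    ∃ α ∈ s, ∃ n : ℤ, n ≠ 0 ∧ α + (n : ℂ) • A.δ ∈ s := by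
  obtain ⟨F, hF⟩ := A.cl_finite
  choose! γ hγ n hn using hF
  obtain ⟨α, hα, β, hβ, hne, hγαβ⟩ :=
    hinf.exists_ne_map_eq_of_mapsTo (fun α hα => hγ α (hs hα)) F.finite_toSet
  refine ⟨α, hα, n β - n α, fun h0 => hne ?_, ?_⟩
  · rw [hn α (hs hα), hn β (hs hβ), hγαβ, sub_eq_zero.1 h0]
  · convert hβ using 1
    have ha := hn α (hs hα)
    have hb := hn β (hs hβ)
    rw [hγαβ, ← Int.cast_smul_eq_zsmul ℂ] at ha
    rw [← Int.cast_smul_eq_zsmul ℂ] at hb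
    push_cast
    linear_combination (norm := module) ha - hb

end

lemma memRatSpan_δ_of_add_smul_δ_mem {α : V} (hα : α ∈ s) {q : ℚ} (hq : q ≠ 0)
    (hβ : α + (q : ℂ) • A.δ ∈ s) : memRatSpan s A.δ := by
  classical
  have hqδ : (q : ℂ) • A.δ ≠ 0 := smul_ne_zero (by exact_mod_cast hq) A.δ_ne
  have hne : α ≠ α + (q : ℂ) • A.δ := fun h => hqδ (left_eq_add.1 h)
  refine ⟨{α, α + (q : ℂ) • A.δ}, fun v => if v = α + (q : ℂ) • A.δ then q⁻¹ else -q⁻¹, ?_, ?_⟩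
  · simp [Set.insert_subset_iff, hα, hβ]
  · rw [Finset.sum_pair hne]
    dsimp only
    rw [if_neg hne, if_pos rfl, smul_add, smul_smul]
    push_cast
    rw [inv_mul_cancel₀ (by exact_mod_cast hq), one_smul, neg_smul]
    abel

lemma mem_span_of_memRatSpan {v : V} (hv : memRatSpan s v) : v ∈ Submodule.span ℂ s := by
  obtain ⟨t, c, hts, rfl⟩ := hv
  exact Submodule.sum_mem _ fun α hα => Submodule.smul_mem _ _ (Submodule.subset_span (hts hα))

lemma reflEquiv_reflEquiv_add_smul_δ {α : V} (hα : α ∈ A.Δre) (c : ℂ) (hβ : α + c • A.δ ∈ A.Δre) :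
    A.reflEquiv α (A.reflEquiv (α + c • A.δ) α) = α - (2 * c) • A.δ := by
  have hBβ : A.B (α + c • A.δ) α = A.B α α := by
    simp [A.B_δ_re α hα]
  have hBββ : A.B (α + c • A.δ) (α + c • A.δ) = A.B α α := by
    simp [A.B_δ_re α hα, A.B_apply_δ hα, A.B_δ_δ]
  rw [A.reflEquiv_apply_eq hβ, hBββ, hBβ, div_mul_cancel₀ 2 (A.B_self_ne_zero hα)]
  simp only [map_sub, map_smul, map_add, A.reflEquiv_self hα, A.reflEquiv_δ hα]
  module

lemma infinite_weylOf_of_add_smul_δ_mem (hs : s ⊆ A.Δre) {α : V} (hα : α ∈ s) {c : ℂ} (hc : c ≠ 0)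
    (hβ : α + c • A.δ ∈ s) :
    ((A.weylOf s : Subgroup (V ≃ₗ[ℂ] V)) : Set (V ≃ₗ[ℂ] V)).Infinite := by
  intro hfin
  have : Finite (A.weylOf s) := hfin.to_subtype
  let g : A.weylOf s := ⟨A.reflEquiv α * A.reflEquiv (α + c • A.δ),
    mul_mem (Subgroup.subset_closure ⟨α, hα, rfl⟩) (Subgroup.subset_closure ⟨_, hβ, rfl⟩)⟩
  have hg : (g : V ≃ₗ[ℂ] V) α = α - (2 * c) • A.δ :=
    A.reflEquiv_reflEquiv_add_smul_δ (hs hα) c (hs hβ)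
  have hpow : ∀ k : ℕ, ((g ^ k : A.weylOf s) : V ≃ₗ[ℂ] V) α = α - (2 * k * c) • A.δ := by
    intro k
    induction k with
    | zero => simp
    | succ k ih =>
      rw [pow_succ, Subgroup.coe_mul, LinearEquiv.mul_apply, hg, map_sub, map_smul, ih,
        apply_δ_of_mem_weylOf hs (g ^ k).2]
      push_cast
      module
  obtain ⟨m, hm, hgm⟩ := (isOfFinOrder_of_finite g).exists_pow_eq_one
  have h0 := hpow m
  rw [hgm, OneMemClass.coe_one, LinearEquiv.coe_one, id_eq, eq_comm, sub_eq_self] at h0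
  have hm0 : (2 * m * c : ℂ) ≠ 0 :=
    mul_ne_zero (mul_ne_zero two_ne_zero (Nat.cast_ne_zero.2 hm.ne')) hc
  exact smul_ne_zero hm0 A.δ_ne h0

lemma memRatSpan_δ_of_infinite (hs : s ⊆ A.Δre) (hinf : s.Infinite) : memRatSpan s A.δ := by
  obtain ⟨α, hα, n, hn, hβ⟩ := exists_add_smul_δ_mem_of_infinite hs hinf
  exact A.memRatSpan_δ_of_add_smul_δ_mem hα (Int.cast_ne_zero.2 hn) (by rwa [Rat.cast_intCast])

lemma infinite_weylOf_of_infinite (hs : s ⊆ A.Δre) (hinf : s.Infinite) :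
    ((A.weylOf s : Subgroup (V ≃ₗ[ℂ] V)) : Set (V ≃ₗ[ℂ] V)).Infinite := by
  obtain ⟨α, hα, n, hn, hβ⟩ := exists_add_smul_δ_mem_of_infinite hs hinf
  exact A.infinite_weylOf_of_add_smul_δ_mem hs hα (Int.cast_ne_zero.2 hn) hβ

end AffineRootSystem

open AffineRootSystem in
/-- For a subsystem `Δ₁` of the real roots of an affine root
system the following are equivalent: (i) `Δ₁` is finite; (ii) the group `W₁`
generated by the reflections `s_α`, `α ∈ Δ₁`, is finite; (iii) `δ` is not in
the `ℂ`-span of `Δ₁`; (iv) `δ` is not in the `ℚ`-span of `Δ₁`. -/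
theorem statement0 {ι V : Type*} [Fintype ι] [AddCommGroup V] [Module ℂ V]
    (A : AffineRootSystem ι V) (Δ₁ : Set V) (h : A.IsSubsystem Δ₁) :
    (Δ₁.Finite ↔ ((A.weylOf Δ₁ : Subgroup (V ≃ₗ[ℂ] V)) : Set (V ≃ₗ[ℂ] V)).Finite) ∧
    (Δ₁.Finite ↔ A.δ ∉ Submodule.span ℂ Δ₁) ∧
    (Δ₁.Finite ↔ ¬ AffineRootSystem.memRatSpan Δ₁ A.δ) := by
  have hrat : ¬ memRatSpan Δ₁ A.δ → Δ₁.Finite :=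
    not_imp_comm.1 (A.memRatSpan_δ_of_infinite h.1)
  refine ⟨⟨finite_weylOf h, fun hW =>
    not_imp_comm.1 (A.infinite_weylOf_of_infinite h.1) hW.not_infinite⟩,
    ⟨δ_notMem_span_of_finite h, fun hδ => hrat (mt mem_span_of_memRatSpan hδ)⟩,
    ⟨fun hfin => mt mem_span_of_memRatSpan (δ_notMem_span_of_finite h hfin), hrat⟩⟩
end

section
/- Let λ ∈ 𝔥* with Δ(λ) ≠ ∅, where Δ(λ) = {α ∈ Δ_re : (α∨, λ+ρ) ∈ ℤ}. Then Δ(λ) is finite if and only if (δ, λ+ρ) ∉ ℚ. -/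
/-!
Shifting a real root `α` by `mδ` changes `(α∨, λ+ρ)` by `2m(δ, λ+ρ)/(α,α)`, and `(α,α)` is a
positive rational. If `(δ, λ+ρ)` is irrational, each of the finitely many classes of `Δ_re`
modulo `ℤδ` therefore contains at most one root of `Δ(λ)`. If it is rational, the `δ`-string
through any root of `Δ(λ)` has an infinite arithmetic progression inside `Δ(λ)`.
-/

open scoped BigOperators

namespace AffineRootSystem

variable {ι V : Type*} [Fintype ι] [AddCommGroup V] [Module ℂ V]
variable (A : AffineRootSystem ι V)

variable {A}

lemma B_add_zsmul_δ_self {α : V} (hα : α ∈ A.Δre) (m : ℤ) :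
    A.B (α + m • A.δ) (α + m • A.δ) = A.B α α := by
  have hδα : A.B A.δ α = 0 := A.B_δ_re α hα
  have hαδ : A.B α A.δ = 0 := by rw [A.symm]; exact hδα
  simp [hδα, hαδ, A.B_δ_δ]

lemma pair_add_zsmul_δ {α : V} (hα : α ∈ A.Δre) (m : ℤ) (v : V) :
    A.pair (α + m • A.δ) v = A.pair α v + 2 / A.B α α * m * A.B A.δ v := by
  rw [pair, pair, coroot, coroot, B_add_zsmul_δ_self hα]
  simp only [map_add, map_zsmul, map_smul,
    LinearMap.add_apply, LinearMap.smul_apply, smul_eq_mul, zsmul_eq_mul]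
  ring

lemma zsmul_δ_injective : Function.Injective fun n : ℤ => n • A.δ := by
  intro m n hmn
  simp only [← Int.cast_smul_eq_zsmul ℂ] at hmn
  exact_mod_cast smul_left_injective ℂ A.δ_ne hmn

lemma exists_rat_of_add_zsmul_δ_mem_Δint {lam α : V} {m : ℤ} (hα : α ∈ A.Δint lam)
    (hm : m ≠ 0) (hαm : α + m • A.δ ∈ A.Δint lam) :
    ∃ q : ℚ, A.B A.δ (lam + A.ρ) = (q : ℂ) := by
  obtain ⟨hαre, k, hk⟩ := hα
  obtain ⟨-, k', hk'⟩ := hαm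
  obtain ⟨p, hp, hpα⟩ := A.norm_rat_pos α hαre
  have hshift := pair_add_zsmul_δ hαre m (lam + A.ρ)
  rw [hk', hk, hpα] at hshift
  have hp0 : (p : ℂ) ≠ 0 := by exact_mod_cast hp.ne'
  have hm0 : (m : ℂ) ≠ 0 := Int.cast_ne_zero.2 hm
  refine ⟨(k' - k) * p / (2 * m), ?_⟩
  push_cast
  field_simp at hshift ⊢
  linear_combination -hshift

lemma Δint_finite_of_irrational {lam : V} (hirr : ¬ ∃ q : ℚ, A.B A.δ (lam + A.ρ) = (q : ℂ)) :
    (A.Δint lam).Finite := by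
  obtain ⟨F, hF⟩ := A.cl_finite
  have hcover : A.Δint lam ⊆ ⋃ γ ∈ (F : Set V), {β ∈ A.Δint lam | ∃ n : ℤ, β = γ + n • A.δ} :=
    fun α hα ↦ by
      obtain ⟨γ, hγ, n, hn⟩ := hF α hα.1
      exact Set.mem_biUnion hγ ⟨hα, n, hn⟩
  refine (F.finite_toSet.biUnion fun γ _ ↦ Set.Subsingleton.finite ?_).subset hcover
  rintro _ ⟨hβ, n, rfl⟩ _ ⟨hβ', n', rfl⟩
  have hdiff : γ + n' • A.δ = γ + n • A.δ + (n' - n) • A.δ := by rw [sub_smul]; abel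
  rw [hdiff] at hβ' ⊢
  by_contra hne
  exact hirr (exists_rat_of_add_zsmul_δ_mem_Δint hβ (fun h ↦ hne (by simp [h])) hβ')

/-- If `(δ, λ+ρ) = q` is rational, the `δ`-string of an integral root `α` stays integral along
the multiples of `N = r · den (2rq/(α,α))`, where `r` is the period of the string. -/
lemma exists_pos_forall_add_zsmul_δ_mem_Δint {lam α : V} (hα : α ∈ A.Δint lam)
    (hrat : ∃ q : ℚ, A.B A.δ (lam + A.ρ) = (q : ℂ)) :
    ∃ N : ℤ, 0 < N ∧ ∀ m : ℤ, α + (m * N) • A.δ ∈ A.Δint lam := by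
  obtain ⟨hαre, k, hk⟩ := hα
  obtain ⟨q, hq⟩ := hrat
  obtain ⟨p, hp, hpα⟩ := A.norm_rat_pos α hαre
  obtain ⟨r, hr, hstring⟩ := A.string α hαre
  set u : ℚ := 2 * r * q / p
  refine ⟨u.den * r, by positivity, fun m ↦ ⟨by simpa [mul_assoc] using hstring (m * u.den), ?_⟩⟩
  refine ⟨k + m * u.num, ?_⟩
  have hint : 2 / p * ((m * (u.den * r) : ℤ) : ℚ) * q = m * u.num := by
    rw [← Rat.den_mul_eq_num u]
    simp only [u]
    push_cast
    field_simp
  rw [pair_add_zsmul_δ hαre, hk, hpα, hq]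
  push_cast
  exact_mod_cast congrArg (fun x : ℚ ↦ (k : ℂ) + x) hint

lemma Δint_infinite_of_rat {lam : V} (hne : (A.Δint lam).Nonempty)
    (hrat : ∃ q : ℚ, A.B A.δ (lam + A.ρ) = (q : ℂ)) : (A.Δint lam).Infinite := by
  obtain ⟨α, hα⟩ := hne
  obtain ⟨N, hN, hmem⟩ := exists_pos_forall_add_zsmul_δ_mem_Δint hα hrat
  refine Set.infinite_of_injective_forall_mem (fun m m' hmm' ↦ ?_) hmem
  exact mul_right_cancel₀ hN.ne' (zsmul_δ_injective (add_left_cancel hmm'))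

end AffineRootSystem

/-- For `λ ∈ 𝔥*` with `Δ(λ) ≠ ∅`, the integral root system
`Δ(λ)` is finite iff `(δ, λ+ρ) ∉ ℚ`. -/
theorem statement4 {ι V : Type*} [Fintype ι] [AddCommGroup V] [Module ℂ V]
    (A : AffineRootSystem ι V) (lam : V) (h : (A.Δint lam).Nonempty) :
    (A.Δint lam).Finite ↔ ¬ ∃ q : ℚ, A.B A.δ (lam + A.ρ) = (q : ℂ) :=
  ⟨fun hfin hrat ↦ A.Δint_infinite_of_rat h hrat hfin, A.Δint_finite_of_irrational⟩
end

section
/- Let V_ℚ be a finite-dimensional ℚ-vector space, V = ℂ ⊗_ℚ V_ℚ. Let X ⊆ V_ℚ*, let A be a finite index set, and for each a ∈ A let Y_a be a nonempty finite subset of V_ℚ*. Let B_x (x ∈ X) and C_{y,a} (a ∈ A, y ∈ Y_a) be rational numbers. Set Ω = {λ ∈ V : ⟨x, λ⟩ = B_x for all x ∈ X} and Ω′ = {λ ∈ Ω : for every a ∈ A there is y ∈ Y_a with ⟨y, λ⟩ ∉ C_{y,a}ℤ}. If Ω′ ≠ ∅, then Ω′ ∩ V_ℚ ≠ ∅. 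-/
/-!
Pick `λ ∈ Ω'` and, for each `a`, a witness `y_a`, so that `s_a = ⟨y_a, λ⟩ ∉ C_{y_a,a}ℤ`.
A `ℚ`-linear map `φ : ℂ → ℚ` fixing `ℚ`, applied to the first tensor factor, sends `λ` to a
rational point `v` with `⟨x, v⟩ = φ ⟨x, λ⟩`; the rational equations are preserved, and so is
every condition with `s_a ∈ ℚ`. The remaining `s_a` are handled by moving `φ` along a line
`ρ + t ψ` of such maps, on which `φ s_a = q_a + t g_a` with `g_a ≠ 0`: taking `t = 1 / 2D` for a
common denominator `D` keeps every `φ s_a` off its lattice `C_{y_a,a}ℤ`.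
-/

open scoped TensorProduct

/-- The canonical pairing `⟨x, λ⟩` between a rational linear functional
`x ∈ V_ℚ*` and a point `λ` of `V = ℂ ⊗_ℚ V_ℚ`, extended `ℂ`-linearly. -/
noncomputable def pairC {V : Type*} [AddCommGroup V] [Module ℚ V]
    (x : Module.Dual ℚ V) (lam : ℂ ⊗[ℚ] V) : ℂ :=
  TensorProduct.lift
    { toFun := fun c : ℂ => c • ((LinearMap.toSpanSingleton ℚ ℂ (1 : ℂ)).comp x)
      map_add' := fun a b => by ext v; simp [add_smul]
      map_smul' := fun q c => by ext v; simp [smul_assoc] } lam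

theorem Rat.exists_forall_ne_intCast_mul_add {ι : Type*} [Finite ι] (u v : ι → ℚ) :
    ∃ t : ℚ, ∀ i (n : ℤ), t ≠ n * u i + v i := by
  have := Fintype.ofFinite ι
  set D : ℕ := ∏ i, (u i).den * (v i).den
  have hD : (D : ℚ) ≠ 0 := by simp [D, Finset.prod_ne_zero_iff]
  have hDmul : ∀ q : ℚ, q.den ∣ D → ∃ z : ℤ, D * q = z := by
    rintro q ⟨k, hk⟩
    exact ⟨k * q.num, by push_cast; rw [hk, ← q.mul_den_eq_num]; push_cast; ring⟩
  refine ⟨1 / (2 * D), fun i n h => ?_⟩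
  have hdvd := Finset.dvd_prod_of_mem (fun i => (u i).den * (v i).den) (Finset.mem_univ i)
  obtain ⟨a, ha⟩ := hDmul (u i) <| (dvd_mul_right _ _).trans hdvd
  obtain ⟨b, hb⟩ := hDmul (v i) <| (dvd_mul_left _ _).trans hdvd
  have h2 : ((2 * (n * a + b) : ℤ) : ℚ) = 1 := by
    push_cast
    rw [← ha, ← hb]
    field_simp at h
    linear_combination -h
  have : 2 * (n * a + b) = 1 := by exact_mod_cast h2
  omega

section RatRetraction

variable {K : Type*} [DivisionRing K] [Algebra ℚ K]

theorem exists_linearMap_rat_forall_ratCast_eq : ∃ ρ : K →ₗ[ℚ] ℚ, ∀ r : ℚ, ρ r = r := by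
  obtain ⟨ρ, hρ⟩ := (Algebra.linearMap ℚ K).exists_leftInverse_of_injective
    (LinearMap.ker_eq_bot.mpr (algebraMap ℚ K).injective)
  refine ⟨ρ, fun r => ?_⟩
  simpa [eq_ratCast] using LinearMap.congr_fun hρ r

theorem exists_linearMap_rat_forall_ne_intCast_mul {ι : Type*} [Finite ι] (s : ι → K)
    (c : ι → ℚ) (hs : ∀ i (n : ℤ), s i ≠ n * c i) :
    ∃ φ : K →ₗ[ℚ] ℚ, (∀ r : ℚ, φ r = r) ∧ ∀ i (n : ℤ), φ (s i) ≠ n * c i := by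
  obtain ⟨ρ, hρ⟩ := exists_linearMap_rat_forall_ratCast_eq (K := K)
  set π : K →ₗ[ℚ] K := LinearMap.id - Algebra.linearMap ℚ K ∘ₗ ρ
  have hπ : ∀ r : ℚ, π r = 0 := fun r => by simp [π, hρ]
  obtain ⟨ψ, hψ⟩ := Module.exists_dual_forall_apply_ne_zero (K := ℚ)
    (fun i : {i // π (s i) ≠ 0} => π (s i)) (fun i => i.2)
  set g : ι → ℚ := fun i => ψ (π (s i))
  obtain ⟨t, ht⟩ := Rat.exists_forall_ne_intCast_mul_add (fun i => c i / g i)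
    (fun i => -ρ (s i) / g i)
  refine ⟨ρ + t • ψ ∘ₗ π, fun r => by simp [hρ, hπ], fun i n h => ?_⟩
  replace h : ρ (s i) + t * g i = n * c i := by simpa [g] using h
  by_cases hg : g i = 0
  · have hrat : s i = ρ (s i) := by
      by_contra hne
      exact hψ ⟨i, by simpa [π, sub_eq_zero] using hne⟩ hg
    rw [hg, mul_zero, add_zero] at h
    refine hs i n ?_
    rw [hrat, h, ← eq_ratCast (algebraMap ℚ K), map_mul, map_intCast, eq_ratCast]
  · exact ht i n (by field_simp; linear_combination h)

end RatRetraction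

section Pairing

variable {V : Type*} [AddCommGroup V] [Module ℚ V]

theorem pairC_tmul (x : Module.Dual ℚ V) (c : ℂ) (v : V) :
    pairC x (c ⊗ₜ[ℚ] v) = c * (x v : ℂ) := by
  simp [pairC, LinearMap.toSpanSingleton_apply, Rat.smul_def]

theorem apply_lid_rTensor_eq_pairC (φ : ℂ →ₗ[ℚ] ℚ) (x : Module.Dual ℚ V) (lam : ℂ ⊗[ℚ] V) :
    x (TensorProduct.lid ℚ V (φ.rTensor V lam)) = φ (pairC x lam) := by
  induction lam using TensorProduct.induction_on with
  | zero => simp [pairC]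
  | tmul c v => rw [pairC_tmul, mul_comm, ← Rat.smul_def, map_smul]; simp [mul_comm]
  | add l₁ l₂ h₁ h₂ => simp only [map_add, h₁, h₂, pairC]

end Pairing

theorem statement6_general {V : Type*} [AddCommGroup V] [Module ℚ V]
    (X : Set (Module.Dual ℚ V)) (A : Type*) [Finite A]
    (Y : A → Finset (Module.Dual ℚ V))
    (Bq : Module.Dual ℚ V → ℚ) (C : A → Module.Dual ℚ V → ℚ)
    (Ω : Set (ℂ ⊗[ℚ] V)) (hΩ : Ω = {lam | ∀ x ∈ X, pairC x lam = (Bq x : ℂ)})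
    (Ω' : Set (ℂ ⊗[ℚ] V))
    (hΩ' : Ω' = {lam ∈ Ω | ∀ a : A, ∃ y ∈ Y a,
      ¬ ∃ n : ℤ, pairC y lam = (n : ℂ) * (C a y : ℂ)})
    (hne : Ω'.Nonempty) :
    ∃ lam ∈ Ω', ∃ v : V, lam = (1 : ℂ) ⊗ₜ[ℚ] v := by
  subst hΩ' hΩ
  obtain ⟨lam, hlam, hcong⟩ := hne
  choose y hyY hy using hcong
  push Not at hy
  obtain ⟨φ, hφ, hφy⟩ := exists_linearMap_rat_forall_ne_intCast_mul
    (fun a => pairC (y a) lam) (fun a => C a (y a)) hy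
  set v := TensorProduct.lid ℚ V (φ.rTensor V lam)
  refine ⟨1 ⊗ₜ v, ⟨fun x hx => ?_, fun a => ⟨y a, hyY a, ?_⟩⟩, v, rfl⟩
  · rw [pairC_tmul, one_mul, apply_lid_rTensor_eq_pairC, hlam x hx, hφ]
  · rintro ⟨n, hn⟩
    rw [pairC_tmul, one_mul, apply_lid_rTensor_eq_pairC] at hn
    exact hφy a n (by exact_mod_cast hn)

/-- Rational points of sets cut out by rational linear
equations and finitely many non-congruence conditions: if
`Ω = {λ ∈ ℂ ⊗ V_ℚ ; ⟨x,λ⟩ = B_x (x ∈ X)}` and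
`Ω' = {λ ∈ Ω ; ∀ a ∈ A, ∃ y ∈ Y_a, ⟨y,λ⟩ ∉ C_{y,a}ℤ}` with `A` finite and each
`Y_a` a nonempty finite set, then `Ω' ≠ ∅` implies `Ω' ∩ V_ℚ ≠ ∅`. -/
theorem statement6 {V : Type*} [AddCommGroup V] [Module ℚ V]
    [FiniteDimensional ℚ V]
    (X : Set (Module.Dual ℚ V)) (A : Type*) [Finite A]
    (Y : A → Finset (Module.Dual ℚ V)) (hY : ∀ a, (Y a).Nonempty)
    (Bq : Module.Dual ℚ V → ℚ) (C : A → Module.Dual ℚ V → ℚ)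
    (Ω : Set (ℂ ⊗[ℚ] V)) (hΩ : Ω = {lam | ∀ x ∈ X, pairC x lam = (Bq x : ℂ)})
    (Ω' : Set (ℂ ⊗[ℚ] V))
    (hΩ' : Ω' = {lam ∈ Ω | ∀ a : A, ∃ y ∈ Y a,
      ¬ ∃ n : ℤ, pairC y lam = (n : ℂ) * (C a y : ℂ)})
    (hne : Ω'.Nonempty) :
    ∃ lam ∈ Ω', ∃ v : V, lam = (1 : ℂ) ⊗ₜ[ℚ] v :=
  statement6_general X A Y Bq C Ω hΩ Ω' hΩ' hne
end

section
/- Let 𝔤ᵢ = 𝔥 ⊕ 𝔤_{α_i} ⊕ 𝔤_{−α_i} with sl₂-triple (e_i, h_i, f_i), and let a ∈ ℂ \ ℤ. Let M be a 𝔤ᵢ-module that is the direct sum of its weight spaces, with all weights μ satisfying ⟨h_i, μ⟩ ≡ a mod ℤ, and such that every element is annihilated by a power of e_i (i.e. ℂ[e_i]m is finite dimensional for all m). Set M_μ^{e_i} = {m ∈ M_μ : e_i m = 0} and N = ⊕_μ M_μ^{e_i} ⊗ M_i(μ), where M_i(μ) is the 𝔤ᵢ-Verma module with highest weight μ and highest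 weight vector m_μ. Then the 𝔤ᵢ-linear map φ : N → M defined by φ(m ⊗ f_i^k m_μ) = f_i^k m is an isomorphism. -/
/-!
Surjectivity: the image `R` of `φ` contains `ker e_i`, since a vector killed by `e_i` splits into
weight components that `e_i` sends to distinct `h_i`-eigenspaces; and `R ⊆ e_i R`, since
`e_i f_i^(k+1) m = (k+1)(⟨h_i,μ⟩ - k) f_i^k m` for `m ∈ M_μ^{e_i}`, a nonzero multiple because
`⟨h_i,μ⟩ ∉ ℤ`. Local nilpotence of `e_i` then forces `R = M`.

Injectivity: write an element of `N` as `∑_{k ≤ n} f_i^k ⊗ m_k` with `m_k ∈ ⊕_μ M_μ^{e_i}`. Applying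
`e_i^n` to its image kills the terms with `k < n` and multiplies the `μ`-component of `m_n` by
`n! ⟨h_i,μ⟩(⟨h_i,μ⟩-1)⋯(⟨h_i,μ⟩-n+1) ≠ 0`, so `m_n = 0` and one descends in `n`.
-/

open scoped TensorProduct DirectSum

variable {M : Type*} [AddCommGroup M] [Module ℂ M]

/-- For `m : M` and an endomorphism `F`, the linear map
`(ℕ →₀ ℂ) →ₗ[ℂ] M` sending the basis vector `single k 1` (thought of as
`f_i^k m_μ` in the Verma module `M_i(μ)`) to `F^k m`. -/
noncomputable def vermaToModAux (F : Module.End ℂ M) (m : M) : (ℕ →₀ ℂ) →ₗ[ℂ] M :=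
  Finsupp.lsum ℂ fun k => LinearMap.toSpanSingleton ℂ M ((F ^ k) m)

/-- The comparison map `φ : N = ⊕_μ M_μ^{e_i} ⊗ M_i(μ) → M`,
`φ(m ⊗ f_i^k m_μ) = f_i^k m`, where the Verma module `M_i(μ)` is realized on
`ℕ →₀ ℂ` with `f_i^k m_μ = single k 1`, and `Mker μ = M_μ^{e_i}`. -/
noncomputable def vermaToMod {Λ : Type*} [DecidableEq Λ]
    (Mker : Λ → Submodule ℂ M) (F : Module.End ℂ M) :
    (⨁ μ : Λ, (↥(Mker μ) ⊗[ℂ] (ℕ →₀ ℂ))) →ₗ[ℂ] M :=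
  DirectSum.toModule ℂ Λ M fun μ =>
    TensorProduct.lift
      { toFun := fun m : ↥(Mker μ) => vermaToModAux F (m : M)
        map_add' := fun m m' => by
          unfold vermaToModAux; ext k; simp
        map_smul' := fun c m => by
          unfold vermaToModAux; ext k; simp }

/-- The action of `f_i` on the Verma module `ℕ →₀ ℂ`: `single k 1 ↦ single (k+1) 1`. -/
noncomputable def vermaF : (ℕ →₀ ℂ) →ₗ[ℂ] (ℕ →₀ ℂ) :=
  Finsupp.lmapDomain ℂ ℂ (· + 1)

/-- The action of `f_i` on `N = ⊕_μ M_μ^{e_i} ⊗ M_i(μ)`. -/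
noncomputable def bigF {Λ : Type*} [DecidableEq Λ] (Mker : Λ → Submodule ℂ M) :
    (⨁ μ : Λ, (↥(Mker μ) ⊗[ℂ] (ℕ →₀ ℂ))) →ₗ[ℂ]
      (⨁ μ : Λ, (↥(Mker μ) ⊗[ℂ] (ℕ →₀ ℂ))) :=
  DirectSum.toModule ℂ Λ _ fun μ =>
    (DirectSum.lof ℂ Λ (fun ν => ↥(Mker ν) ⊗[ℂ] (ℕ →₀ ℂ)) μ).comp
      (LinearMap.lTensor ↥(Mker μ) vermaF)

namespace Sl2

variable {R V : Type*} [CommRing R] [AddCommGroup V] [Module R V] {E F H : Module.End R V}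

theorem H_apply_F_pow (hHF : H * F - F * H = (-2 : R) • F) {x : V} {c : R}
    (hHx : H x = c • x) (k : ℕ) : H ((F ^ k) x) = (c - 2 * k) • (F ^ k) x := by
  induction k with
  | zero => simpa using hHx
  | succ k ih =>
    have hcomm := LinearMap.congr_fun hHF ((F ^ k) x)
    simp only [LinearMap.sub_apply, Module.End.mul_apply, LinearMap.smul_apply, ih,
      map_smul] at hcomm
    rw [pow_succ', Module.End.mul_apply, sub_eq_iff_eq_add.mp hcomm]
    push_cast
    module

theorem E_apply_F_pow_succ (hEF : E * F - F * E = H) (hHF : H * F - F * H = (-2 : R) • F)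
    {x : V} {c : R} (hEx : E x = 0) (hHx : H x = c • x) (k : ℕ) :
    E ((F ^ (k + 1)) x) = ((k + 1) * (c - k) : R) • (F ^ k) x := by
  induction k with
  | zero =>
    have hcomm := LinearMap.congr_fun hEF x
    simp only [LinearMap.sub_apply, Module.End.mul_apply, hEx, map_zero, sub_zero] at hcomm
    simp [hcomm, hHx]
  | succ k ih =>
    have hcomm := LinearMap.congr_fun hEF ((F ^ (k + 1)) x)
    simp only [LinearMap.sub_apply, Module.End.mul_apply, ih, map_smul,
      H_apply_F_pow hHF hHx] at hcomm
    rw [pow_succ' F (k + 1), Module.End.mul_apply, sub_eq_iff_eq_add.mp hcomm,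
      ← Module.End.mul_apply, ← pow_succ']
    push_cast
    module

theorem E_pow_apply_F_pow_of_lt (hEF : E * F - F * E = H) (hHF : H * F - F * H = (-2 : R) • F)
    {x : V} {c : R} (hEx : E x = 0) (hHx : H x = c • x) {k n : ℕ} (hkn : k < n) :
    (E ^ n) ((F ^ k) x) = 0 := by
  induction k generalizing n with
  | zero =>
    obtain ⟨n, rfl⟩ := Nat.exists_eq_add_of_lt hkn
    simp [pow_succ, hEx]
  | succ k ih =>
    obtain ⟨n, rfl⟩ := Nat.exists_eq_add_of_lt (Nat.zero_lt_of_lt hkn)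
    rw [zero_add, pow_succ, Module.End.mul_apply, E_apply_F_pow_succ hEF hHF hEx hHx, map_smul,
      ih (by omega), smul_zero]

theorem E_pow_apply_F_pow_self (hEF : E * F - F * E = H) (hHF : H * F - F * H = (-2 : R) • F)
    {x : V} {c : R} (hEx : E x = 0) (hHx : H x = c • x) (k : ℕ) :
    (E ^ k) ((F ^ k) x) = ((k.factorial : R) * (descPochhammer R k).eval c) • x := by
  induction k with
  | zero => simp
  | succ k ih =>
    rw [pow_succ, Module.End.mul_apply, E_apply_F_pow_succ hEF hHF hEx hHx, map_smul, ih,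
      smul_smul, descPochhammer_succ_eval, Nat.factorial_succ]
    push_cast
    ring_nf

theorem E_apply_mem_eigenspace (hHE : H * E - E * H = (2 : R) • E)
    {x : V} {c : R} (hHx : H x = c • x) : E x ∈ Module.End.eigenspace H (c + 2) := by
  have hcomm := LinearMap.congr_fun hHE x
  simp only [LinearMap.sub_apply, Module.End.mul_apply, LinearMap.smul_apply, hHx,
    map_smul] at hcomm
  rw [Module.End.mem_eigenspace_iff, sub_eq_iff_eq_add.mp hcomm]
  module

theorem factorial_mul_descPochhammer_eval_ne_zero [IsDomain R] [CharZero R] {c : R}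
    (hc : ∀ j : ℕ, c ≠ j) (k : ℕ) : (k.factorial : R) * (descPochhammer R k).eval c ≠ 0 := by
  rw [descPochhammer_eval_eq_prod_range]
  exact mul_ne_zero (by exact_mod_cast k.factorial_ne_zero)
    (Finset.prod_ne_zero_iff.mpr fun j _ => sub_ne_zero.mpr (hc j))

end Sl2

section LinearAlgebra

variable {R V W : Type*} [CommRing R] [AddCommGroup V] [Module R V] [AddCommGroup W] [Module R W]

theorem injective_lsum_pow_comp {E F : Module.End R V} {ι : W →ₗ[R] V}
    (hvanish : ∀ w k n, k < n → (E ^ n) ((F ^ k) (ι w)) = 0)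
    (hdiag : ∀ n, Function.Injective ((E ^ n) ∘ₗ (F ^ n) ∘ₗ ι)) :
    Function.Injective (Finsupp.lsum R fun k => (F ^ k) ∘ₗ ι) := by
  rw [injective_iff_map_eq_zero]
  intro ψ hψ
  obtain ⟨n, hsupp⟩ := Finset.exists_nat_subset_range ψ.support
  induction n generalizing ψ with
  | zero => simpa using hsupp
  | succ n ih =>
    have hlt : ∀ k, ψ k ≠ 0 → k ≠ n → k < n := fun k hk hkn =>
      lt_of_le_of_ne (Nat.lt_succ_iff.mp
        (Finset.mem_range.mp (hsupp (Finsupp.mem_support_iff.mpr hk)))) hkn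
    have htop : ψ n = 0 := by
      refine (injective_iff_map_eq_zero _).mp (hdiag n) _ ?_
      have hEψ := congrArg (E ^ n) hψ
      rwa [Finsupp.lsum_apply, map_finsuppSum, map_zero, Finsupp.sum_eq_single n
        (fun k hk hkn => hvanish _ _ _ (hlt k hk hkn)) (by simp)] at hEψ
    refine ih ψ hψ fun k hk => Finset.mem_range.mpr (hlt k (Finsupp.mem_support_iff.mp hk) ?_)
    rintro rfl
    exact Finsupp.mem_support_iff.mp hk htop

theorem eq_top_of_ker_le_of_le_map {E : Module.End R V} (hnil : ∀ v, ∃ n, (E ^ n) v = 0)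
    {P : Submodule R V} (hker : LinearMap.ker E ≤ P) (hP : P ≤ P.map E) : P = ⊤ := by
  refine Submodule.eq_top_iff'.mpr fun v => ?_
  obtain ⟨n, hv⟩ := hnil v
  induction n generalizing v with
  | zero => simp_all
  | succ n ih =>
    rw [pow_succ, Module.End.mul_apply] at hv
    obtain ⟨u, hu, hEu⟩ := hP (ih _ hv)
    have hvu : v - u ∈ LinearMap.ker E := by simp [hEu]
    simpa using add_mem (hker hvu) hu

theorem ker_le_iSup_inf_ker {Λ : Type*} {f : V →ₗ[R] W} {p : Λ → Submodule R V}
    {q : Λ → Submodule R W} (htop : iSup p = ⊤) (hq : iSupIndep q)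
    (hpq : ∀ μ, p μ ≤ (q μ).comap f) :
    LinearMap.ker f ≤ ⨆ μ, p μ ⊓ LinearMap.ker f := by
  intro v hv
  obtain ⟨w, hwp, rfl⟩ :=
    (Submodule.mem_iSup_iff_exists_finsupp p v).mp (htop ▸ Submodule.mem_top)
  have hfw : ∀ μ ∈ w.support, f (w μ) = 0 :=
    (iSupIndep_iff_finsetSum_eq_zero_imp_eq_zero q).mp hq w.support (fun μ => f (w μ))
      (fun μ _ => hpq μ (hwp μ)) (by simpa [Finsupp.sum, map_sum] using hv)
  exact Submodule.sum_mem _ fun μ hμ =>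
    Submodule.mem_iSup_of_mem μ ⟨hwp μ, hfw μ hμ⟩

end LinearAlgebra

section Verma

variable {Λ : Type*} [DecidableEq Λ] (Mker : Λ → Submodule ℂ M) (F : Module.End ℂ M)

theorem vermaToMod_lof_tmul_single (μ : Λ) (v : Mker μ) (k : ℕ) :
    vermaToMod Mker F (DirectSum.lof ℂ Λ (fun ν => ↥(Mker ν) ⊗[ℂ] (ℕ →₀ ℂ)) μ
      (v ⊗ₜ Finsupp.single k 1)) = (F ^ k) v := by
  simp [vermaToMod, vermaToModAux]

theorem vermaToMod_comp_bigF : vermaToMod Mker F ∘ₗ bigF Mker = F ∘ₗ vermaToMod Mker F := by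
  ext μ v k
  simp [bigF, vermaF, vermaToMod_lof_tmul_single, pow_succ']

noncomputable def vermaEquiv :
    (⨁ μ, ↥(Mker μ) ⊗[ℂ] (ℕ →₀ ℂ)) ≃ₗ[ℂ] (ℕ →₀ ⨁ μ, Mker μ) :=
  (TensorProduct.directSumLeft ℂ ℂ (fun μ => ↥(Mker μ)) (ℕ →₀ ℂ)).symm ≪≫ₗ
    TensorProduct.finsuppScalarRight ℂ ℂ (⨁ μ, Mker μ) ℕ

theorem vermaToMod_eq_lsum_comp_vermaEquiv :
    vermaToMod Mker F = Finsupp.lsum ℂ (fun k => (F ^ k) ∘ₗ DirectSum.coeLinearMap Mker) ∘ₗ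
      (vermaEquiv Mker).toLinearMap := by
  ext μ v k
  simp [vermaToMod_lof_tmul_single, vermaEquiv, TensorProduct.finsuppScalarRight_apply_tmul]

theorem range_vermaToMod_le {S : Submodule ℂ M} (h : ∀ μ k, ∀ v ∈ Mker μ, (F ^ k) v ∈ S) :
    LinearMap.range (vermaToMod Mker F) ≤ S := by
  rw [← Submodule.ker_mkQ S, LinearMap.range_le_ker_iff]
  ext μ v k
  simpa [vermaToMod_lof_tmul_single] using h μ k v v.2

theorem pow_apply_mem_range_vermaToMod {μ : Λ} {v : M} (hv : v ∈ Mker μ) (k : ℕ) :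
    (F ^ k) v ∈ LinearMap.range (vermaToMod Mker F) :=
  ⟨_, vermaToMod_lof_tmul_single Mker F μ ⟨v, hv⟩ k⟩

variable {Mker F} {E H : Module.End ℂ M} {c : Λ → ℂ}

theorem injective_vermaToMod (hEF : E * F - F * E = H) (hHF : H * F - F * H = (-2 : ℂ) • F)
    (hprim : ∀ μ, ∀ v ∈ Mker μ, E v = 0 ∧ H v = c μ • v)
    (hc : ∀ μ, Mker μ ≠ ⊥ → ∀ j : ℕ, c μ ≠ j) (hindep : iSupIndep Mker) :
    Function.Injective (vermaToMod Mker F) := by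
  rw [vermaToMod_eq_lsum_comp_vermaEquiv]
  refine (injective_lsum_pow_comp (E := E) ?_ fun n => ?_).comp (vermaEquiv Mker).injective
  · intro w k n hkn
    induction w using DirectSum.induction_on with
    | zero => simp
    | of μ v =>
      simpa using Sl2.E_pow_apply_F_pow_of_lt hEF hHF (hprim μ v v.2).1 (hprim μ v v.2).2 hkn
    | add w w' hw hw' => simp [hw, hw']
  · have hcomm : (E ^ n) ∘ₗ (F ^ n) ∘ₗ DirectSum.coeLinearMap Mker =
        DirectSum.coeLinearMap Mker ∘ₗ DirectSum.lmap
          (fun μ => ((n.factorial : ℂ) * (descPochhammer ℂ n).eval (c μ)) • LinearMap.id) := by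
      ext μ v
      simp [Sl2.E_pow_apply_F_pow_self hEF hHF (hprim μ v v.2).1 (hprim μ v v.2).2]
    rw [hcomm]
    refine hindep.dfinsupp_lsum_injective.comp ((DirectSum.lmap_injective _).mpr fun μ => ?_)
    by_cases hμ : Mker μ = ⊥
    · have := Submodule.subsingleton_iff_eq_bot.mpr hμ
      exact Function.injective_of_subsingleton _
    · exact smul_right_injective _ (Sl2.factorial_mul_descPochhammer_eval_ne_zero (hc μ hμ) n)

theorem range_vermaToMod_le_map (hEF : E * F - F * E = H) (hHF : H * F - F * H = (-2 : ℂ) • F)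
    (hprim : ∀ μ, ∀ v ∈ Mker μ, E v = 0 ∧ H v = c μ • v)
    (hc : ∀ μ, Mker μ ≠ ⊥ → ∀ j : ℕ, c μ ≠ j) :
    LinearMap.range (vermaToMod Mker F) ≤ (LinearMap.range (vermaToMod Mker F)).map E := by
  refine range_vermaToMod_le Mker F fun μ k v hv => ?_
  by_cases hv0 : v = 0
  · simp [hv0]
  have hs : ((k + 1) * (c μ - k) : ℂ) ≠ 0 := mul_ne_zero (Nat.cast_add_one_ne_zero k)
    (sub_ne_zero.mpr (hc μ ((Submodule.ne_bot_iff _).mpr ⟨v, hv, hv0⟩) k))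
  refine ⟨((k + 1) * (c μ - k) : ℂ)⁻¹ • (F ^ (k + 1)) v,
    Submodule.smul_mem _ _ (pow_apply_mem_range_vermaToMod Mker F hv _), ?_⟩
  rw [map_smul, Sl2.E_apply_F_pow_succ hEF hHF (hprim μ v hv).1 (hprim μ v hv).2, smul_smul,
    inv_mul_cancel₀ hs, one_smul]

end Verma

theorem ne_natCast_of_eq_add_intCast {K : Type*} [CommRing K] {a c : K} (ha : ∀ n : ℤ, a ≠ n)
    {n : ℤ} (hc : c = a + n) (j : ℕ) : c ≠ j := by
  intro hj
  apply ha (j - n)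
  push_cast
  linear_combination hj - hc

/-- Let `𝔤ᵢ`-data be given by commuting-relation
endomorphisms `E, F, H` of `M` (`[E,F] = H`, `[H,E] = 2E`, `[H,F] = -2F`),
with `M` the internal direct sum of its weight spaces `Mw μ` (`H` acting on
`Mw μ` by `⟨h_i, μ⟩ = hpair μ`), all weights congruent to `a ∉ ℤ` mod `ℤ`, and
`E` locally nilpotent.  Then the canonical `𝔤ᵢ`-linear map
`φ : ⊕_μ M_μ^{e_i} ⊗ M_i(μ) → M`, `φ(m ⊗ f_i^k m_μ) = f_i^k m`, is an
isomorphism (it is bijective and intertwines the `f_i`-actions). -/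
theorem statement13 {Λ : Type*} [DecidableEq Λ]
    (hpair : Λ → ℂ)                      -- μ ↦ ⟨h_i, μ⟩
    (Mw : Λ → Submodule ℂ M)             -- weight spaces
    (E F H : Module.End ℂ M)
    (a : ℂ) (ha : ∀ n : ℤ, a ≠ (n : ℂ))
    (hinj : Function.Injective hpair)
    (hEF : E * F - F * E = H)
    (hHE : H * E - E * H = (2 : ℂ) • E)
    (hHF : H * F - F * H = (-2 : ℂ) • F)
    (hdirect : DirectSum.IsInternal Mw)
    (hH : ∀ μ, ∀ m ∈ Mw μ, H m = hpair μ • m)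
    (hcong : ∀ μ, Mw μ ≠ ⊥ → ∃ n : ℤ, hpair μ = a + (n : ℂ))
    (hlocnilp : ∀ m : M, ∃ n : ℕ, (E ^ n) m = 0)
    (Mker : Λ → Submodule ℂ M)
    (hMker : ∀ μ, Mker μ = Mw μ ⊓ LinearMap.ker E) :
    Function.Bijective (vermaToMod Mker F) ∧
    (vermaToMod Mker F).comp (bigF Mker) = F.comp (vermaToMod Mker F) := by
  have hprim : ∀ μ, ∀ v ∈ Mker μ, E v = 0 ∧ H v = hpair μ • v := fun μ v hv => by
    rw [hMker μ] at hv
    exact ⟨hv.2, hH μ v hv.1⟩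
  have hc : ∀ μ, Mker μ ≠ ⊥ → ∀ j : ℕ, hpair μ ≠ j := fun μ hμ => by
    obtain ⟨n, hn⟩ := hcong μ (ne_bot_of_le_ne_bot hμ ((hMker μ).trans_le inf_le_left))
    exact ne_natCast_of_eq_add_intCast ha hn
  have hker : LinearMap.ker E ≤ LinearMap.range (vermaToMod Mker F) := by
    have hshift : iSupIndep fun μ => Module.End.eigenspace H (hpair μ + 2) :=
      (Module.End.eigenspaces_iSupIndep H).comp fun μ ν h => hinj (add_right_cancel h)
    refine (ker_le_iSup_inf_ker hdirect.submodule_iSup_eq_top hshift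
      fun μ v hv => Sl2.E_apply_mem_eigenspace hHE (hH μ v hv)).trans (iSup_le fun μ v hv => ?_)
    simpa using pow_apply_mem_range_vermaToMod Mker F ((hMker μ).symm ▸ hv) 0
  refine ⟨⟨injective_vermaToMod hEF hHF hprim hc
    (hdirect.submodule_iSupIndep.mono fun μ => (hMker μ).trans_le inf_le_left), ?_⟩,
    vermaToMod_comp_bigF Mker F⟩
  exact LinearMap.range_eq_top.mp
    (eq_top_of_ker_le_of_le_map hlocnilp hker (range_vermaToMod_le_map hEF hHF hprim hc))
end
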